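/- arXiv:math/0607222 — 4 statements merged into one kernel-verified Lean document; each statement's English description precedes it below -/
import Mathlib

section
/- Let H be an infinite-dimensional separable complex Hilbert space and let 𝒥 be a complete locally convex operator ideal in 𝔅(H) such that the trilinear multiplication map 𝔅(H) × 𝒥 × 𝔅(H) → 𝒥 is jointly continuous. Then the trace-class ideal 𝓛₁(H) is contained in 𝒥. -/
open scoped InnerProductSpace

/-- The rank-one operator `φ_{ξ,η} : x ↦ ⟨η, x⟩ • ξ`. -/
noncomputable def rankOne {H : Type*} [NormedAddCommGroup H] [InnerProductSpace ℂ H]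
    (ξ η : H) : H →L[ℂ] H :=
  (innerSL ℂ η).smulRight ξ

/-- `T` is trace class (`T ∈ 𝓛₁`) iff it admits a representation
`T = Σ λ_i φ_{ξ_i,η_i}` with unit vectors `ξ_i, η_i` and `(λ_i)` absolutely summable. -/
def IsTraceClass {H : Type*} [NormedAddCommGroup H] [InnerProductSpace ℂ H]
    (T : H →L[ℂ] H) : Prop :=
  ∃ (lam : ℕ → ℂ) (ξ η : ℕ → H),
    Summable (fun i => ‖lam i‖) ∧ (∀ i, ‖ξ i‖ = 1) ∧ (∀ i, ‖η i‖ = 1) ∧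
    T = ∑' i, lam i • rankOne (ξ i) (η i)

/-- In a `ℂ`-module which is also an `ℝ`-module compatibly, real scalar action coincides
with the action of the corresponding complex scalar. -/
theorem real_smul_eq_coe_smul' {J : Type*} [AddCommGroup J] [Module ℝ J] [Module ℂ J]
    [IsScalarTower ℝ ℂ J] (s : ℝ) (x : J) : (s : ℂ) • x = s • x := by
  rw [← smul_one_smul ℂ s x]
  norm_num

/-- The norm of the coercion of a nonnegative real to `ℂ`. -/
theorem norm_coe_of_nonneg' {s : ℝ} (hs : 0 ≤ s) : ‖(s : ℂ)‖ = s := by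
  rw [Complex.norm_real, Real.norm_of_nonneg hs]

/-- A balanced convex set containing `0` is stable under absolutely convex combinations. -/
theorem sum_smul_mem_of_balanced_convex {J : Type*} [AddCommGroup J] [Module ℝ J] [Module ℂ J]
    [IsScalarTower ℝ ℂ J] {W : Set J} (hbal : Balanced ℂ W) (hconv : Convex ℝ W)
    (h0 : (0 : J) ∈ W) (t : Finset ℕ) (c : ℕ → ℂ) (w : ℕ → J)
    (hw : ∀ i ∈ t, w i ∈ W) (hc : ∑ i ∈ t, ‖c i‖ ≤ 1) :
    (∑ i ∈ t, c i • w i) ∈ W := by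
  classical
  set S := ∑ i ∈ t, ‖c i‖ with hS
  have hS0 : 0 ≤ S := Finset.sum_nonneg fun i _ => norm_nonneg _
  rcases eq_or_lt_of_le hS0 with h0S | h0S
  · have hz : ∀ i ∈ t, c i = 0 := by
      intro i hi
      have := (Finset.sum_eq_zero_iff_of_nonneg (fun i _ => norm_nonneg (c i))).mp h0S.symm i hi
      exact norm_eq_zero.mp this
    have hzz : ∑ i ∈ t, c i • w i = 0 :=
      Finset.sum_eq_zero fun i hi => by rw [hz i hi, zero_smul]
    rw [hzz]; exact h0
  · set u : ℕ → J := fun i => if c i = 0 then 0 else (((‖c i‖ : ℂ))⁻¹ * c i) • w i with hu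
    have hu_mem : ∀ i ∈ t, u i ∈ W := by
      intro i hi
      by_cases h : c i = 0
      · simp [hu, h, h0]
      · simp only [hu, if_neg h]
        have hn : ‖((‖c i‖ : ℂ))⁻¹ * c i‖ ≤ 1 := by
          rw [norm_mul, norm_inv, norm_coe_of_nonneg' (norm_nonneg _),
            inv_mul_cancel₀ (norm_ne_zero_iff.mpr h)]
        exact hbal _ hn (Set.smul_mem_smul_set (hw i hi))
    have hcw : ∀ i ∈ t, c i • w i = ‖c i‖ • u i := by
      intro i hi
      by_cases h : c i = 0
      · simp [hu, h]
      · simp only [hu, if_neg h]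
        rw [← real_smul_eq_coe_smul' (‖c i‖), smul_smul, ← mul_assoc,
          mul_inv_cancel₀ (by exact_mod_cast norm_ne_zero_iff.mpr h), one_mul]
    have hSne : S ≠ 0 := ne_of_gt h0S
    have h1 : ∑ i ∈ t, c i • w i = S • ∑ i ∈ t, (S⁻¹ * ‖c i‖) • u i := by
      rw [Finset.smul_sum]
      rw [Finset.sum_congr rfl hcw]
      refine Finset.sum_congr rfl fun i hi => ?_
      rw [smul_smul, ← mul_assoc, mul_inv_cancel₀ hSne, one_mul]
    have hzmem : (∑ i ∈ t, (S⁻¹ * ‖c i‖) • u i) ∈ W := by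
      refine hconv.sum_mem (fun i hi => by positivity) ?_ hu_mem
      rw [← Finset.mul_sum, ← hS, inv_mul_cancel₀ hSne]
    have h2 : ((S : ℂ)) • (∑ i ∈ t, (S⁻¹ * ‖c i‖) • u i) ∈ W := by
      refine hbal _ ?_ (Set.smul_mem_smul_set hzmem)
      rw [norm_coe_of_nonneg' hS0]; exact hc
    rw [real_smul_eq_coe_smul'] at h2
    rw [h1]; exact h2

/-- If `𝒥` is a nonzero complete locally convex operator ideal in `𝔅(H)` (for `H` an
infinite-dimensional separable Hilbert space) such that the multiplication map
`𝔅(H) × 𝒥 × 𝔅(H) → 𝒥` is jointly continuous, then `𝓛₁(H) ⊆ 𝒥`. -/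
theorem traceClass_subset_of_locallyConvex_ideal
    {H : Type*} [NormedAddCommGroup H] [InnerProductSpace ℂ H] [CompleteSpace H]
    [TopologicalSpace.SeparableSpace H] (hinf : ¬ FiniteDimensional ℂ H)
    -- 𝒥 : an abstract complete locally convex space ...
    {J : Type*} [AddCommGroup J] [Module ℝ J] [Module ℂ J] [IsScalarTower ℝ ℂ J]
    [UniformSpace J] [IsUniformAddGroup J] [ContinuousSMul ℂ J] [CompleteSpace J]
    [LocallyConvexSpace ℝ J]
    -- ... realized as a two-sided ideal of 𝔅(H) via a continuous injection ι:
    (ι : J →ₗ[ℂ] (H →L[ℂ] H)) (hι : Function.Injective ι) (hcont : Continuous ι)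
    (hne : ∃ x : J, ι x ≠ 0)
    (hproper : LinearMap.range ι ≠ ⊤)
    (m : (H →L[ℂ] H) → J → (H →L[ℂ] H) → J)
    (hm : ∀ a x b, ι (m a x b) = a * ι x * b)
    (hmcont : Continuous fun p : (H →L[ℂ] H) × J × (H →L[ℂ] H) => m p.1 p.2.1 p.2.2) :
    ∀ T : H →L[ℂ] H, IsTraceClass T → T ∈ LinearMap.range ι := by
  classical
  obtain ⟨x₀, hx₀⟩ := hne
  have hv : ∃ v : H, ι x₀ v ≠ 0 := by
    by_contra h
    push_neg at h
    exact hx₀ (ContinuousLinearMap.ext fun v => by rw [h v]; rfl)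
  obtain ⟨v, hv⟩ := hv
  set A : H →L[ℂ] H := ι x₀ with hA
  set w : H := A v with hwdef
  have hw0 : w ≠ 0 := hv
  have hwn : ‖w‖ ≠ 0 := norm_ne_zero_iff.mpr hw0
  rintro T ⟨lam, ξ, η, hsum, hξ, hη, hT⟩
  -- rank-one factorizations through A
  set a : ℕ → (H →L[ℂ] H) := fun i => (((‖w‖ : ℂ)) ^ 2)⁻¹ • rankOne (ξ i) w with ha
  set b : ℕ → (H →L[ℂ] H) := fun i => rankOne v (η i) with hb
  have hab : ∀ i, a i * A * b i = rankOne (ξ i) (η i) := by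
    intro i
    ext x
    simp only [ha, hb, ContinuousLinearMap.mul_apply, ContinuousLinearMap.smul_apply,
      show ∀ (p q y : H), rankOne p q y = (⟪q, y⟫_ℂ) • p from fun _ _ _ => rfl,
      map_smul, ← hwdef]
    rw [smul_smul ((((‖w‖ : ℂ)) ^ 2)⁻¹), inner_self_eq_norm_sq_to_K]
    norm_cast
    field_simp [hwn]
    simp [hwn]
  -- multiplicative structure of m
  have hmsl : ∀ (c : ℂ) (a' : H →L[ℂ] H) (x : J) (b' : H →L[ℂ] H),
      m (c • a') x b' = c • m a' x b' := by
    intro c a' x b'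
    apply hι
    rw [map_smul, hm, hm, smul_mul_assoc, smul_mul_assoc]
  have hmsr : ∀ (c : ℂ) (a' : H →L[ℂ] H) (x : J) (b' : H →L[ℂ] H),
      m a' x (c • b') = c • m a' x b' := by
    intro c a' x b'
    apply hι
    rw [map_smul, hm, hm, mul_smul_comm]
  have hm0 : m 0 x₀ 0 = 0 := by
    apply hι
    rw [hm, map_zero]
    simp
  -- norm bounds
  have hrk : ∀ (p q : H), ‖rankOne p q‖ = ‖q‖ * ‖p‖ := fun p q => by
    rw [rankOne, ContinuousLinearMap.norm_smulRight_apply, innerSL_apply_norm]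
  set R : ℝ := ‖w‖⁻¹ + ‖v‖ with hR
  have hR0 : 0 ≤ R := by positivity
  have hba : ∀ i, ‖a i‖ ≤ R := by
    intro i
    rw [ha, norm_smul, hrk, hξ i, mul_one, norm_inv, norm_pow,
      norm_coe_of_nonneg' (norm_nonneg w), sq]
    rw [mul_inv, mul_assoc, inv_mul_cancel₀ hwn, mul_one, hR]
    exact le_add_of_nonneg_right (norm_nonneg v)
  have hbb : ∀ i, ‖b i‖ ≤ R := by
    intro i
    rw [hb, hrk, hη i, one_mul, hR]
    exact le_add_of_nonneg_left (by positivity)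
  set g : ℕ → J := fun i => m (a i) x₀ (b i) with hg
  set f : ℕ → J := fun i => lam i • g i with hf
  -- summability of f
  have hsummf : Summable f := by
    rw [summable_iff_vanishing]
    intro e he
    obtain ⟨W, ⟨hW0, hWbal, hWconv⟩, hWe⟩ : ∃ W : Set J,
        (W ∈ nhds (0 : J) ∧ Balanced ℂ W ∧ Convex ℝ W) ∧ W ⊆ e := by
      obtain ⟨s, ⟨hs0, hsconv⟩, hse⟩ := (LocallyConvexSpace.convex_basis_zero ℝ J).mem_iff.mp he
      refine ⟨convexHull ℝ (balancedCore ℂ s), ⟨Filter.mem_of_superset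
        (balancedCore_mem_nhds_zero hs0) (subset_convexHull ℝ _), ?_, convex_convexHull ℝ _⟩,
        (convexHull_min (balancedCore_subset s) hsconv).trans hse⟩
      intro c hc
      rintro _ ⟨y, hy, rfl⟩
      let L : J →ₗ[ℝ] J :=
        { toFun := fun x => c • x
          map_add' := smul_add c
          map_smul' := fun r x => by
            simp only [RingHom.id_apply, ← real_smul_eq_coe_smul', smul_smul, mul_comm] }
      have hLy : c • y = L y := rfl
      change L y ∈ _
      have hmem : L y ∈ L '' convexHull ℝ (balancedCore ℂ s) := Set.mem_image_of_mem L hy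
      rw [LinearMap.image_convexHull] at hmem
      refine convexHull_mono ?_ hmem
      rintro _ ⟨z, hz, rfl⟩
      exact (balancedCore_balanced s) c hc (Set.smul_mem_smul_set hz)
    have h0W : (0 : J) ∈ W := mem_of_mem_nhds hW0
    -- joint continuity at (0, x₀, 0)
    have hct : ContinuousAt
        (fun p : (H →L[ℂ] H) × J × (H →L[ℂ] H) => m p.1 p.2.1 p.2.2) (0, x₀, 0) :=
      hmcont.continuousAt
    have hWnhds : W ∈ nhds (m (0 : H →L[ℂ] H) x₀ (0 : H →L[ℂ] H)) := by
      rw [hm0]; exact hW0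
    have hpre : {p : (H →L[ℂ] H) × J × (H →L[ℂ] H) | m p.1 p.2.1 p.2.2 ∈ W} ∈
        nhds ((0, x₀, 0) : (H →L[ℂ] H) × J × (H →L[ℂ] H)) := hct hWnhds
    obtain ⟨u₁, hu₁, v₁, hv₁, hsub₁⟩ := mem_nhds_prod_iff.mp hpre
    obtain ⟨u₂, hu₂, v₂, hv₂, hsub₂⟩ := mem_nhds_prod_iff.mp hv₁
    obtain ⟨ε₁, hε₁, hball₁⟩ := Metric.mem_nhds_iff.mp hu₁
    obtain ⟨ε₂, hε₂, hball₂⟩ := Metric.mem_nhds_iff.mp hv₂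
    set ε : ℝ := min ε₁ ε₂ with hε
    have hεpos : 0 < ε := lt_min hε₁ hε₂
    have hWm : ∀ a' b' : H →L[ℂ] H, ‖a'‖ < ε → ‖b'‖ < ε → m a' x₀ b' ∈ W := by
      intro a' b' hna hnb
      have ha' : a' ∈ u₁ := hball₁ (by
        rw [Metric.mem_ball, dist_zero_right]; exact lt_of_lt_of_le hna (min_le_left _ _))
      have hb' : b' ∈ v₂ := hball₂ (by
        rw [Metric.mem_ball, dist_zero_right]; exact lt_of_lt_of_le hnb (min_le_right _ _))
      have hx₀' : x₀ ∈ u₂ := mem_of_mem_nhds hu₂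
      exact hsub₁ (Set.mk_mem_prod ha' (hsub₂ (Set.mk_mem_prod hx₀' hb')))
    -- rescale
    set r : ℝ := ε / (2 * (R + 1)) with hr
    have hrpos : 0 < r := by positivity
    have hrR : r * R < ε := by
      have h1 : r * (R + 1) = ε / 2 := by
        rw [hr]; field_simp
      rw [mul_add, mul_one] at h1
      clear_value r ε R
      linarith
    set wi : ℕ → J := fun i => m ((r : ℂ) • a i) x₀ ((r : ℂ) • b i) with hwi
    have hwiW : ∀ i, wi i ∈ W := by
      intro i
      refine hWm _ _ ?_ ?_
      · rw [norm_smul, norm_coe_of_nonneg' hrpos.le]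
        exact lt_of_le_of_lt (mul_le_mul_of_nonneg_left (hba i) hrpos.le) hrR
      · rw [norm_smul, norm_coe_of_nonneg' hrpos.le]
        exact lt_of_le_of_lt (mul_le_mul_of_nonneg_left (hbb i) hrpos.le) hrR
    have hwig : ∀ i, wi i = ((r : ℂ) * (r : ℂ)) • g i := by
      intro i
      simp only [hwi]
      rw [hmsl, hmsr, smul_smul]
    set c : ℕ → ℂ := fun i => lam i * ((r : ℂ) * (r : ℂ))⁻¹ with hc
    have hrC : ((r : ℂ) * (r : ℂ)) ≠ 0 := by
      have : (r : ℂ) ≠ 0 := by exact_mod_cast ne_of_gt hrpos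
      exact mul_ne_zero this this
    have hfc : ∀ i, f i = c i • wi i := by
      intro i
      rw [hf, hwig, hc, smul_smul, mul_assoc, inv_mul_cancel₀ hrC, mul_one]
    have hcsum : Summable fun i => ‖c i‖ := by
      have hcc : (fun i => ‖c i‖) = fun i => ‖lam i‖ * ‖((r : ℂ) * (r : ℂ))⁻¹‖ := by
        funext i; rw [hc, norm_mul]
      rw [hcc]
      exact hsum.mul_right _
    obtain ⟨s₀, hs₀⟩ := summable_iff_vanishing.mp hcsum (Set.Iio 1) (Iio_mem_nhds one_pos)
    refine ⟨s₀, fun t ht => hWe ?_⟩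
    have hsmall : ∑ i ∈ t, ‖c i‖ ≤ 1 := le_of_lt (hs₀ t ht)
    have hft : ∑ i ∈ t, f i = ∑ i ∈ t, c i • wi i := Finset.sum_congr rfl fun i _ => hfc i
    rw [hft]
    exact sum_smul_mem_of_balanced_convex hWbal hWconv h0W t c wi (fun i _ => hwiW i) hsmall
  -- conclude
  obtain ⟨y, hy⟩ := hsummf
  refine ⟨y, ?_⟩
  have hmap : HasSum (fun i => ι (f i)) (ι y) := hy.map ι.toAddMonoidHom hcont
  have hfi : ∀ i, ι (f i) = lam i • rankOne (ξ i) (η i) := by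
    intro i
    rw [hf, map_smul, hg, hm, ← hA, hab]
  rw [show (fun i => ι (f i)) = fun i => lam i • rankOne (ξ i) (η i) from funext hfi] at hmap
  rw [hT, hmap.tsum_eq]
end

section
/- Let 𝒥 be a Fréchet operator ideal in 𝔅(H), i.e. 𝒥 carries a complete metrizable locally convex topology with continuous inclusion 𝒥 → 𝔅(H). Then the multiplication map 𝔅(H) × 𝒥 × 𝔅(H) → 𝒥, (a,b,c) ↦ abc, is jointly continuous. -/
open Filter Topology Set Function Pointwise

section NearlyOpen
variable {E F : Type*}
  [AddCommGroup E] [Module ℝ E] [TopologicalSpace E] [IsTopologicalAddGroup E] [ContinuousSMul ℝ E]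
  [AddCommGroup F] [Module ℝ F] [TopologicalSpace F] [IsTopologicalAddGroup F] [ContinuousSMul ℝ F]

lemma aux_sub_nhds {U : Set E} (hU : U ∈ 𝓝 (0 : E)) :
    ∃ V ∈ 𝓝 (0 : E), V - V ⊆ U := by
  have hc : ContinuousAt (fun p : E × E => p.1 - p.2) (0, 0) := (continuous_sub).continuousAt
  have h0 : (fun p : E × E => p.1 - p.2) (0, 0) = 0 := by simp
  have := hc (by rw [h0]; exact hU)
  rw [nhds_prod_eq] at this
  rcases Filter.mem_prod_iff.mp this with ⟨V₁, hV₁, V₂, hV₂, hsub⟩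
  refine ⟨V₁ ∩ V₂, inter_mem hV₁ hV₂, ?_⟩
  rintro z ⟨a, ⟨ha1, _⟩, b, ⟨_, hb2⟩, rfl⟩
  exact hsub (⟨ha1, hb2⟩ : (a, b) ∈ V₁ ×ˢ V₂)

lemma nearly_open [BaireSpace F] (f : E →ₗ[ℝ] F) (hsurj : Surjective f)
    {U : Set E} (hU : U ∈ 𝓝 0) : closure (f '' U) ∈ 𝓝 (0 : F) := by
  obtain ⟨V, hV, hVU⟩ := aux_sub_nhds hU
  have habs : Absorbent ℝ V := absorbent_nhds_zero hV
  -- Baire argument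
  have hcl : ∀ n : ℕ, IsClosed (((n : ℝ) + 1) • closure (f '' V)) := fun n =>
    isClosed_closure.smul_of_ne_zero (by positivity)
  have hcover : (⋃ n : ℕ, ((n : ℝ) + 1) • closure (f '' V)) = univ := by
    refine eq_univ_of_forall fun y => ?_
    obtain ⟨x, rfl⟩ := hsurj y
    obtain ⟨r, hr⟩ := absorbs_iff_norm.mp (habs x)
    obtain ⟨n, hn⟩ := exists_nat_ge r
    have hx : x ∈ ((n : ℝ) + 1) • V := by
      refine hr ((n : ℝ) + 1) ?_ rfl
      rw [Real.norm_eq_abs, abs_of_nonneg (by positivity)]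
      linarith
    obtain ⟨v, hv, rfl⟩ := hx
    exact mem_iUnion.mpr ⟨n, ⟨f v, subset_closure ⟨v, hv, rfl⟩, (map_smul f _ _).symm⟩⟩
  obtain ⟨n, z, hz⟩ := nonempty_interior_of_iUnion_of_closed hcl hcover
  rw [interior_smul₀ (by positivity : ((n:ℝ)+1) ≠ 0)] at hz
  obtain ⟨w, hw, rfl⟩ := hz
  -- so w ∈ interior (closure (f '' V)); then (interior (closure (f''V))) - w is an open nbhd of 0
  have hmem : ∀ y ∈ closure (f '' V), ∀ y' ∈ closure (f '' V), y - y' ∈ closure (f '' U) := by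
    intro y hy y' hy'
    have : y - y' ∈ closure (f '' V - f '' V) :=
      map_mem_closure₂ continuous_sub hy hy' fun a ha b hb => sub_mem_sub ha hb
    refine closure_mono ?_ this
    rintro _ ⟨a, ⟨va, hva, rfl⟩, b, ⟨vb, hvb, rfl⟩, rfl⟩
    exact ⟨va - vb, hVU (sub_mem_sub hva hvb), map_sub f _ _⟩
  rw [mem_nhds_iff]
  refine ⟨(fun y => y - w) '' interior (closure (f '' V)), ?_, ?_, ?_⟩
  · rintro _ ⟨y, hy, rfl⟩
    exact hmem y (interior_subset hy) w (interior_subset hw)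
  · exact (isOpenMap_sub_right w) _ isOpen_interior
  · exact ⟨w, hw, sub_self w⟩

end NearlyOpen

section OpenMap
variable {E F : Type*}
  [AddCommGroup E] [Module ℝ E] [UniformSpace E] [IsUniformAddGroup E] [ContinuousSMul ℝ E]
  [CompleteSpace E] [FirstCountableTopology E]
  [AddCommGroup F] [Module ℝ F] [TopologicalSpace F] [IsTopologicalAddGroup F] [ContinuousSMul ℝ F]
  [BaireSpace F] [T2Space F]

lemma image_nhds (f : E →ₗ[ℝ] F) (hf : Continuous f) (hsurj : Surjective f)
    {U : Set E} (hU : U ∈ 𝓝 0) : f '' U ∈ 𝓝 (0 : F) := by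
  -- a closed neighborhood inside U
  obtain ⟨U₀, ⟨hU₀n, hU₀c⟩, hU₀U⟩ := (closed_nhds_basis (0 : E)).mem_iff.mp hU
  -- antitone basis of 𝓝 0 in E
  obtain ⟨W, hW⟩ := (𝓝 (0 : E)).exists_antitone_basis
  -- recursively shrinking neighborhoods
  have step : ∀ (Q : Set E) (n : ℕ), ∃ V' : Set E,
      Q ∈ 𝓝 (0 : E) → (V' ∈ 𝓝 (0 : E) ∧ V' ⊆ W n ∧ V' + V' ⊆ Q) := by
    intro Q n
    by_cases hQ : Q ∈ 𝓝 (0 : E)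
    · obtain ⟨V₁, hV₁, hhalf⟩ := exists_nhds_zero_half hQ
      refine ⟨V₁ ∩ W n, fun _ => ⟨inter_mem hV₁ (hW.mem n), inter_subset_right, ?_⟩⟩
      rintro z ⟨a, ⟨ha, _⟩, b, ⟨hb, _⟩, rfl⟩
      exact hhalf a ha b hb
    · exact ⟨∅, fun h => absurd h hQ⟩
  choose Vf hVf using step
  let V : ℕ → Set E := fun n => Nat.rec U₀ (fun k Vk => Vf Vk (k + 1)) n
  have hV0 : V 0 = U₀ := rfl
  have hVs : ∀ k, V (k + 1) = Vf (V k) (k + 1) := fun k => rfl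
  have hVnhds : ∀ n, V n ∈ 𝓝 (0 : E) := by
    intro n; induction n with
    | zero => exact hU₀n
    | succ k ih => rw [hVs]; exact (hVf (V k) (k + 1) ih).1
  have hVW : ∀ k, V (k + 1) ⊆ W (k + 1) := fun k => (hVf (V k) (k + 1) (hVnhds k)).2.1
  have hVadd : ∀ k, V (k + 1) + V (k + 1) ⊆ V k := fun k => (hVf (V k) (k + 1) (hVnhds k)).2.2
  have hV0mem : ∀ n, (0 : E) ∈ V n := fun n => mem_of_mem_nhds (hVnhds n)
  -- nearly open
  have hno : ∀ n, closure (f '' V n) ∈ 𝓝 (0 : F) := fun n => nearly_open f hsurj (hVnhds n)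
  -- main inclusion
  have main : closure (f '' V 1) ⊆ f '' U := by
    intro y hy
    -- one-step approximation
    have key : ∀ (k : ℕ) (s : E), ∃ g : E, y - f s ∈ closure (f '' V (k + 1)) →
        g ∈ V (k + 1) ∧ y - f (s + g) ∈ closure (f '' V (k + 2)) := by
      intro k s
      by_cases h : y - f s ∈ closure (f '' V (k + 1))
      · have ht : (fun z : F => y - f s - z) ⁻¹' closure (f '' V (k + 2)) ∈ 𝓝 (y - f s) := by
          refine (Continuous.continuousAt (by continuity)).preimage_mem_nhds ?_
          simpa using hno (k + 2)
        obtain ⟨z, hz1, hz2⟩ := (mem_closure_iff_nhds.mp h) _ ht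
        obtain ⟨v, hv, rfl⟩ := hz2
        refine ⟨v, fun _ => ⟨hv, ?_⟩⟩
        simpa [map_add, sub_sub] using hz1
      · exact ⟨0, fun h' => absurd h' h⟩
    choose g hg using key
    let S : ℕ → E := fun n => Nat.rec 0 (fun k Sk => Sk + g k Sk) n
    have hS0 : S 0 = 0 := rfl
    have hSs : ∀ k, S (k + 1) = S k + g k (S k) := fun k => rfl
    have hQ : ∀ k, y - f (S k) ∈ closure (f '' V (k + 1)) := by
      intro k; induction k with
      | zero => simpa [hS0, map_zero] using hy
      | succ k ih => rw [hSs]; exact (hg k (S k) ih).2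
    have hginc : ∀ k, S (k + 1) - S k ∈ V (k + 1) := by
      intro k
      rw [hSs, add_sub_cancel_left]
      exact (hg k (S k) (hQ k)).1
    have hdiff : ∀ (k n : ℕ), S (n + k) - S n ∈ V n := by
      intro k
      induction k with
      | zero => intro n; simpa using hV0mem n
      | succ k ih =>
        intro n
        have h1 : S (n + (k + 1)) - S (n + 1) ∈ V (n + 1) := by
          have := ih (n + 1); rwa [show n + 1 + k = n + (k + 1) by omega] at this
        have h2 : S (n + 1) - S n ∈ V (n + 1) := hginc n
        have : S (n + (k + 1)) - S n = (S (n + (k + 1)) - S (n + 1)) + (S (n + 1) - S n) := by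
          abel
        rw [this]
        exact hVadd n (add_mem_add h1 h2)
    -- S is Cauchy
    have hcauchy : CauchySeq S := by
      rw [cauchySeq_iff_tendsto]
      rw [uniformity_eq_comap_nhds_zero E, tendsto_comap_iff]
      intro U' hU'
      have hnegU' : (fun x : E => -x) ⁻¹' U' ∈ 𝓝 (0 : E) :=
        (continuous_neg.continuousAt (x := (0 : E))).preimage_mem_nhds (by simpa using hU')
      obtain ⟨n, -, hn⟩ := hW.toHasBasis.mem_iff.mp (inter_mem hU' hnegU')
      rw [Filter.mem_map]
      have : {p : ℕ × ℕ | n + 1 ≤ p.1 ∧ n + 1 ≤ p.2} ∈ (atTop : Filter (ℕ × ℕ)) := by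
        rw [← prod_atTop_atTop_eq]
        exact prod_mem_prod (eventually_ge_atTop _) (eventually_ge_atTop _)
      filter_upwards [this]
      rintro ⟨m₁, m₂⟩ ⟨hm₁, hm₂⟩
      simp only [Prod.map_apply, mem_preimage]
      have hcase : ∀ a b : ℕ, n + 1 ≤ a → a ≤ b → S b - S a ∈ W n := by
        intro a b ha hab
        have := hdiff (b - a) a
        rw [show a + (b - a) = b by omega] at this
        have haW : V a ⊆ W n := by
          obtain ⟨a', rfl⟩ : ∃ a', a = a' + 1 := ⟨a - 1, by omega⟩
          exact (hVW a').trans (hW.antitone (by omega))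
        exact haW this
      rcases le_total m₁ m₂ with h | h
      · exact (hn (hcase m₁ m₂ hm₁ h)).1
      · have := (hn (hcase m₂ m₁ hm₂ h)).2
        simpa using this
    obtain ⟨xl, hxl⟩ := cauchySeq_tendsto_of_complete hcauchy
    -- xl ∈ U₀ ⊆ U
    have hSU₀ : ∀ k, S k ∈ U₀ := by
      intro k
      have := hdiff k 0
      rw [hS0, zero_add, sub_zero] at this
      rwa [hV0] at this
    have hxlU : xl ∈ U := by
      have : xl ∈ closure U₀ :=
        mem_closure_of_tendsto hxl (Filter.Eventually.of_forall hSU₀)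
      rw [hU₀c.closure_eq] at this
      exact hU₀U this
    -- f (S k) → y
    have hyf : Tendsto (fun k => y - f (S k)) atTop (𝓝 (0 : F)) := by
      intro M hM
      obtain ⟨M', ⟨hM'n, hM'c⟩, hM'M⟩ := (closed_nhds_basis (0 : F)).mem_iff.mp hM
      have hpre : f ⁻¹' M' ∈ 𝓝 (0 : E) :=
        (hf.continuousAt (x := (0 : E))).preimage_mem_nhds (by simpa [map_zero] using hM'n)
      obtain ⟨j, -, hj⟩ := hW.toHasBasis.mem_iff.mp hpre
      rw [Filter.mem_map]
      filter_upwards [eventually_ge_atTop j]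
      intro k hk
      have h1 : V (k + 1) ⊆ f ⁻¹' M' := (hVW k).trans ((hW.antitone (by omega)).trans hj)
      have h2 : closure (f '' V (k + 1)) ⊆ M' := by
        rw [← hM'c.closure_eq]
        exact closure_mono (by rintro _ ⟨v, hv, rfl⟩; exact h1 hv)
      exact hM'M (h2 (hQ k))
    have hfy : Tendsto (fun k => f (S k)) atTop (𝓝 y) := by
      have := tendsto_const_nhds.sub hyf (f := fun _ : ℕ => y)
      simpa using this
    have hfx : Tendsto (fun k => f (S k)) atTop (𝓝 (f xl)) :=
      (hf.continuousAt.tendsto).comp hxl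
    exact ⟨xl, hxlU, (tendsto_nhds_unique hfx hfy)⟩
  exact mem_of_superset (hno 1) main

end OpenMap

section ClosedGraph
variable {E F G : Type*}
  [AddCommGroup E] [Module ℝ E] [UniformSpace E] [IsUniformAddGroup E] [ContinuousSMul ℝ E]
  [CompleteSpace E] [FirstCountableTopology E] [BaireSpace E] [T2Space E]
  [AddCommGroup F] [Module ℝ F] [UniformSpace F] [IsUniformAddGroup F] [ContinuousSMul ℝ F]
  [CompleteSpace F] [FirstCountableTopology F]
  [AddCommGroup G] [Module ℝ G] [TopologicalSpace G] [IsTopologicalAddGroup G] [T2Space G]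

/-- Closed graph theorem, in the convenient form: if `T : E → F` is linear between complete
metrizable TVS and `j ∘ T` is continuous for some continuous injective linear `j`, then `T`
is continuous. -/
theorem continuous_of_comp_injective (T : E →ₗ[ℝ] F) (j : F →ₗ[ℝ] G)
    (hj : Continuous j) (hjinj : Injective j) (hjT : Continuous (fun x => j (T x))) :
    Continuous T := by
  -- the graph of T is closed
  set Γ : Submodule ℝ (E × F) := LinearMap.graph T with hΓ
  have hΓclosed : IsClosed (Γ : Set (E × F)) := by
    have : (Γ : Set (E × F)) = {p : E × F | j (T p.1) - j p.2 = 0} := by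
      ext p
      simp only [SetLike.mem_coe, LinearMap.mem_graph_iff, mem_setOf_eq, sub_eq_zero]
      exact ⟨fun h => by rw [h], fun h => (hjinj h).symm⟩
    rw [this]
    exact isClosed_eq ((hjT.comp continuous_fst).sub (hj.comp continuous_snd)) continuous_const
  haveI : IsUniformAddGroup Γ := Γ.toAddSubgroup.isUniformAddGroup
  haveI : FirstCountableTopology Γ :=
    Topology.IsInducing.firstCountableTopology Topology.IsInducing.subtypeVal
  haveI : CompleteSpace Γ := hΓclosed.completeSpace_coe
  -- the first projection restricted to the graph
  let π : Γ →ₗ[ℝ] E := (LinearMap.fst ℝ E F).comp Γ.subtype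
  have hπcont : Continuous π := continuous_fst.comp continuous_subtype_val
  have hπsurj : Surjective π := fun x => ⟨⟨(x, T x), by simp [hΓ]⟩, rfl⟩
  -- continuity of T at 0
  have hT0 : ContinuousAt T 0 := by
    intro M hM
    rw [map_zero T] at hM
    set U : Set Γ := (fun γ : Γ => (γ : E × F).2) ⁻¹' M with hU
    have hUnhds : U ∈ 𝓝 (0 : Γ) := by
      refine (continuous_snd.comp continuous_subtype_val).continuousAt.preimage_mem_nhds ?_
      simpa using hM
    have himg := image_nhds π hπcont hπsurj hUnhds
    rw [Filter.mem_map]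
    refine mem_of_superset himg ?_
    rintro _ ⟨γ, hγU, rfl⟩
    have hmem : (γ : E × F).2 = T (γ : E × F).1 := (LinearMap.mem_graph_iff T _).mp γ.2
    exact mem_preimage.mpr (hmem ▸ hγU)
  exact continuous_of_continuousAt_zero T.toAddMonoidHom hT0

end ClosedGraph

section Equi
variable {E : Type*} [AddCommGroup E] [Module ℝ E] [UniformSpace E] [IsUniformAddGroup E]
  [ContinuousSMul ℝ E] [BarrelledSpace ℝ E]
  {Y : Type*} [AddCommGroup Y] [Module ℝ Y] [UniformSpace Y] [IsUniformAddGroup Y]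
  [ContinuousSMul ℝ Y] [LocallyConvexSpace ℝ Y]

lemma tendsto_zero_of_ptwise (T : ℕ → E →L[ℝ] Y)
    (hptwise : ∀ e : E, ∃ l : Y, Tendsto (fun n => T n e) atTop (𝓝 l))
    {y : ℕ → E} (hy : Tendsto y atTop (𝓝 0)) :
    Tendsto (fun n => T n (y n)) atTop (𝓝 (0 : Y)) := by
  have hq := with_gaugeSeminormFamily (𝕜 := ℝ) (E := Y)
  have hbdd : ∀ k x, BddAbove (range fun n => gaugeSeminormFamily ℝ Y k (T n x)) := by
    intro k x
    obtain ⟨l, hl⟩ := hptwise x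
    exact (((hq.continuous_seminorm k).tendsto l).comp hl).bddAbove_range
  have hequi : UniformEquicontinuous ((↑) ∘ T) := hq.banach_steinhaus hbdd
  have hequi0 : EquicontinuousAt (fun n => ⇑(T n)) 0 := hequi.equicontinuous 0
  rw [nhds_eq_comap_uniformity, tendsto_comap_iff]
  intro U hU
  have h1 : ∀ᶠ x in 𝓝 (0 : E), ∀ n, ((T n) 0, (T n) x) ∈ U := hequi0 U hU
  have h2 := hy.eventually h1
  rw [Filter.mem_map]
  refine Filter.mem_of_superset h2 fun n hn => ?_
  have := hn n
  rw [map_zero] at this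
  exact this

end Equi


set_option maxHeartbeats 2000000 in
set_option synthInstance.maxHeartbeats 400000 in


/-- If `𝒥` is a Fréchet operator ideal in `𝔅(H)` (a proper two-sided ideal carrying a
complete metrizable locally convex topology with continuous inclusion into `𝔅(H)`), then
the multiplication map `𝔅(H) × 𝒥 × 𝔅(H) → 𝒥`, `(a,b,c) ↦ abc`, is jointly continuous. -/
theorem frechet_ideal_mul_jointly_continuous
    {H : Type*} [NormedAddCommGroup H] [InnerProductSpace ℂ H] [CompleteSpace H]
    [TopologicalSpace.SeparableSpace H] (hinf : ¬ FiniteDimensional ℂ H)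
    -- 𝒥 : an abstract complete metrizable locally convex space ...
    {J : Type*} [AddCommGroup J] [Module ℝ J] [Module ℂ J] [IsScalarTower ℝ ℂ J]
    [UniformSpace J] [IsUniformAddGroup J] [ContinuousSMul ℂ J] [CompleteSpace J]
    [TopologicalSpace.MetrizableSpace J] [LocallyConvexSpace ℝ J]
    -- ... realized as a proper two-sided ideal of 𝔅(H) via a continuous injection ι:
    (ι : J →ₗ[ℂ] (H →L[ℂ] H)) (hι : Function.Injective ι) (hcont : Continuous ι)
    (hne : ∃ x : J, ι x ≠ 0) (hproper : LinearMap.range ι ≠ ⊤)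
    (hideal : ∀ (a b : H →L[ℂ] H), ∀ x : J, a * ι x * b ∈ LinearMap.range ι) :
    ∃ m : (H →L[ℂ] H) → J → (H →L[ℂ] H) → J,
      (∀ a x b, ι (m a x b) = a * ι x * b) ∧
      Continuous fun p : (H →L[ℂ] H) × J × (H →L[ℂ] H) => m p.1 p.2.1 p.2.2 := by
  classical
  -- instances on J
  have hsmulR : ∀ (r : ℝ) (x : J), r • x = ((r : ℂ)) • x := fun r x => by
    rw [← smul_one_smul ℂ r x]
    norm_num [Complex.real_smul]
  haveI : ContinuousSMul ℝ J := by
    constructor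
    have h : Continuous fun p : ℝ × J => ((p.1 : ℂ)) • p.2 :=
      (Complex.continuous_ofReal.comp continuous_fst).smul continuous_snd
    simpa only [hsmulR] using h
  haveI : (uniformity J).IsCountablyGenerated := by
    rw [uniformity_eq_comap_nhds_zero J]
    exact Filter.comap.isCountablyGenerated _ _
  haveI : BaireSpace J := inferInstance
  haveI : BaireSpace (H →L[ℂ] H) := inferInstance
  have hsmulRB : ∀ (r : ℝ) (w : H →L[ℂ] H), r • w = ((r : ℂ)) • w := fun r w => by
    rw [← smul_one_smul ℂ r w]
    norm_num [Complex.real_smul]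
  -- definition of m
  let e : J ≃ₗ[ℂ] LinearMap.range ι := LinearEquiv.ofInjective ι hι
  let m : (H →L[ℂ] H) → J → (H →L[ℂ] H) → J :=
    fun a x b => e.symm ⟨a * ι x * b, hideal a b x⟩
  have hm : ∀ a x b, ι (m a x b) = a * ι x * b := by
    intro a x b
    have h1 : e (m a x b) = ⟨a * ι x * b, hideal a b x⟩ := e.apply_symm_apply _
    have h3 : ι (m a x b) = ↑(e (m a x b)) := rfl
    rw [h3, h1]
  refine ⟨m, hm, ?_⟩
  -- algebraic identities
  have haddm : ∀ a a' x x' b b', m (a + a') x b + m a' x' b' =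
      m (a + a') x b + m a' x' b' := fun _ _ _ _ _ _ => rfl
  have hadd1 : ∀ a a' x b, m (a + a') x b = m a x b + m a' x b := by
    intro a a' x b
    apply hι
    rw [hm, map_add, hm, hm, add_mul, add_mul]
  have hadd2 : ∀ a x x' b, m a (x + x') b = m a x b + m a x' b := by
    intro a x x' b
    apply hι
    rw [hm, map_add, map_add, hm, hm, mul_add, add_mul]
  have hsub1 : ∀ a a' x b, m (a - a') x b = m a x b - m a' x b := by
    intro a a' x b
    apply hι
    rw [hm, map_sub, hm, hm, sub_mul, sub_mul]
  -- the ι as an ℝ-linear map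
  let ιR : J →ₗ[ℝ] (H →L[ℂ] H) := ι.restrictScalars ℝ
  have hιR : Continuous ιR := hcont
  -- bundled continuous linear maps in each slot
  have mk_x : ∀ (a b : H →L[ℂ] H), ∃ T : J →L[ℝ] J, ∀ x, T x = m a x b := by
    intro a b
    let L : J →ₗ[ℝ] J :=
      { toFun := fun x => m a x b
        map_add' := fun x y => hadd2 a x y b
        map_smul' := fun r z => by
          apply hι
          rw [RingHom.id_apply, hm, hsmulR r z, map_smul, hsmulR r (m a z b), map_smul,
            hm, mul_smul_comm, smul_mul_assoc] }
    have hLc : Continuous L := by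
      refine continuous_of_comp_injective L ιR hιR hι ?_
      have : (fun x => ιR (L x)) = fun x => a * ι x * b := by
        funext x; exact hm a x b
      rw [this]
      exact (continuous_const.mul hcont).mul continuous_const
    exact ⟨⟨L, hLc⟩, fun x => rfl⟩
  have mk_a : ∀ (x : J) (b : H →L[ℂ] H), ∃ T : (H →L[ℂ] H) →L[ℝ] J, ∀ a, T a = m a x b := by
    intro x b
    let L : (H →L[ℂ] H) →ₗ[ℝ] J :=
      { toFun := fun a => m a x b
        map_add' := fun a a' => hadd1 a a' x b
        map_smul' := fun r a => by
          apply hι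
          rw [RingHom.id_apply, hm, hsmulRB r a, hsmulR r (m a x b), map_smul, hm,
            smul_mul_assoc, smul_mul_assoc] }
    have hLc : Continuous L := by
      refine continuous_of_comp_injective L ιR hιR hι ?_
      have : (fun a => ιR (L a)) = fun a : H →L[ℂ] H => a * ι x * b := by
        funext a; exact hm a x b
      rw [this]
      exact (continuous_id.mul continuous_const).mul continuous_const
    exact ⟨⟨L, hLc⟩, fun a => rfl⟩
  have mk_b : ∀ (a : H →L[ℂ] H) (x : J), ∃ T : (H →L[ℂ] H) →L[ℝ] J, ∀ b, T b = m a x b := by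
    intro a x
    let L : (H →L[ℂ] H) →ₗ[ℝ] J :=
      { toFun := fun b => m a x b
        map_add' := fun b b' => by
          apply hι
          rw [map_add, hm, hm, hm, mul_add]
        map_smul' := fun r b => by
          apply hι
          rw [RingHom.id_apply, hm, hsmulRB r b, hsmulR r (m a x b), map_smul, hm,
            mul_smul_comm] }
    have hLc : Continuous L := by
      refine continuous_of_comp_injective L ιR hιR hι ?_
      have : (fun b => ιR (L b)) = fun b : H →L[ℂ] H => a * ι x * b := by
        funext b; exact hm a x b
      rw [this]
      exact continuous_const.mul continuous_id
    exact ⟨⟨L, hLc⟩, fun b => rfl⟩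
  choose TX hTX using mk_x
  choose TA hTA using mk_a
  choose TB hTB using mk_b
  -- sequential continuity
  apply SeqContinuous.continuous
  rintro u ⟨a₀, x₀, b₀⟩ hu
  have ha : Tendsto (fun n => (u n).1) atTop (𝓝 a₀) := (continuous_fst.tendsto _).comp hu
  have hx : Tendsto (fun n => (u n).2.1) atTop (𝓝 x₀) :=
    ((continuous_fst.comp continuous_snd).tendsto _).comp hu
  have hb : Tendsto (fun n => (u n).2.2) atTop (𝓝 b₀) :=
    ((continuous_snd.comp continuous_snd).tendsto _).comp hu
  set a : ℕ → H →L[ℂ] H := fun n => (u n).1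
  set x : ℕ → J := fun n => (u n).2.1
  set b : ℕ → H →L[ℂ] H := fun n => (u n).2.2
  -- pointwise convergence
  have hpt : ∀ z : J, Tendsto (fun n => m (a n) z (b n)) atTop (𝓝 (m a₀ z b₀)) := by
    intro z
    have h1 : Tendsto (fun n => m a₀ z (b n)) atTop (𝓝 (m a₀ z b₀)) := by
      have := ((TB a₀ z).continuous.tendsto b₀).comp hb
      simpa only [Function.comp_def, hTB] using this
    have h2 : Tendsto (fun n => m (a n - a₀) z (b n)) atTop (𝓝 (0 : J)) := by
      have hptA : ∀ c : H →L[ℂ] H, ∃ l : J,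
          Tendsto (fun n => TA z (b n) c) atTop (𝓝 l) := by
        intro c
        refine ⟨m c z b₀, ?_⟩
        have := ((TB c z).continuous.tendsto b₀).comp hb
        simpa only [Function.comp_def, hTA, hTB] using this
      have hy : Tendsto (fun n => a n - a₀) atTop (𝓝 0) := by
        simpa using ha.sub (tendsto_const_nhds (x := a₀))
      have := tendsto_zero_of_ptwise (fun n => TA z (b n)) hptA hy
      simpa only [Function.comp_def, hTA] using this
    have hcomb := h2.add h1
    rw [zero_add] at hcomb
    refine hcomb.congr fun n => ?_
    rw [← hadd1, sub_add_cancel]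
  -- equicontinuity in the middle slot
  have hz : Tendsto (fun n => TX (a n) (b n) (x n - x₀)) atTop (𝓝 (0 : J)) := by
    refine tendsto_zero_of_ptwise _ (fun z => ⟨m a₀ z b₀, ?_⟩) ?_
    · simpa only [hTX] using hpt z
    · simpa using hx.sub (tendsto_const_nhds (x := x₀))
  have hfinal := hz.add (hpt x₀)
  rw [zero_add] at hfinal
  refine hfinal.congr fun n => ?_
  simp only [hTX]
  rw [← hadd2, sub_add_cancel]
  rfl
end

section
/- Let 𝒥 be an operator ideal with 𝒥² = 𝒥. Then 𝒥 satisfies the right triple factorization property: for every finite collection a₁,…,aₙ ∈ 𝒥, there exist b₁,…,bₙ, c ∈ 𝒥 such that aᵢ = bᵢ c² for all i, c is positive, and the left annihilator of c² coincides with the left annihilator of c. -/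
set_option synthInstance.maxHeartbeats 1000000
set_option maxHeartbeats 1000000


theorem my_douglas {H K₁ K₂ : Type*} [NormedAddCommGroup H] [InnerProductSpace ℂ H]
    [NormedAddCommGroup K₁] [InnerProductSpace ℂ K₁] [CompleteSpace K₁]
    [NormedAddCommGroup K₂] [InnerProductSpace ℂ K₂] [CompleteSpace K₂]
    (A : H →L[ℂ] K₁) (T : H →L[ℂ] K₂) (hAT : ∀ x, ‖A x‖ ≤ ‖T x‖) :
    ∃ D : K₂ →L[ℂ] K₁, A = D ∘L T := by
  classical
  have hker : ∀ x y : H, T x = T y → A x = A y := by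
    intro x y hxy
    have h1 := hAT (x - y)
    rw [map_sub, map_sub, hxy, sub_self, norm_zero] at h1
    have := le_antisymm h1 (norm_nonneg _)
    rwa [norm_eq_zero, sub_eq_zero] at this
  set R : Submodule ℂ K₂ := LinearMap.range (T : H →ₗ[ℂ] K₂) with hR
  set V : Submodule ℂ K₂ := R.topologicalClosure with hV
  haveI : CompleteSpace V := (R.isClosed_topologicalClosure).completeSpace_coe
  set W : Submodule ℂ V := R.comap V.subtype with hWdef
  have hWd : Dense (W : Set V) := by
    intro v
    rw [closure_subtype]
    have himg : (Subtype.val '' (W : Set V)) = (R : Set K₂) := by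
      ext z
      constructor
      · rintro ⟨w, hw, rfl⟩; exact hw
      · intro hz
        exact ⟨⟨z, R.le_topologicalClosure hz⟩, hz, rfl⟩
    rw [himg]
    have := v.2
    rwa [hV, ← Submodule.topologicalClosure_coe] at *
  have hw : ∀ w : W, ∃ x : H, T x = ((w : V) : K₂) := by
    rintro ⟨⟨z, hzV⟩, hzW⟩
    exact hzW
  set pre : W → H := fun w => (hw w).choose with hpre_def
  have hpre : ∀ w, T (pre w) = ((w : V) : K₂) := fun w => (hw w).choose_spec
  have hcongr : ∀ (x : H) (w : W), T x = ((w : V) : K₂) → A x = A (pre w) := by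
    intro x w hx
    exact hker _ _ (by rw [hx, hpre])
  set f₀ : W →ₗ[ℂ] K₁ :=
    { toFun := fun w => A (pre w)
      map_add' := by
        intro w₁ w₂
        have h1 : T (pre w₁ + pre w₂) = (((w₁ + w₂ : W) : V) : K₂) := by
          rw [map_add, hpre, hpre]; push_cast; ring_nf
        show A (pre (w₁ + w₂)) = A (pre w₁) + A (pre w₂)
        rw [← hcongr _ _ h1, map_add]
      map_smul' := by
        intro c w
        have h1 : T (c • pre w) = (((c • w : W) : V) : K₂) := by
          rw [map_smul, hpre]; push_cast; ring_nf
        show A (pre (c • w)) = (RingHom.id ℂ) c • A (pre w)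
        rw [← hcongr _ _ h1, map_smul]
        rfl } with hf₀
  have hf₀bound : ∀ w : W, ‖f₀ w‖ ≤ 1 * ‖w‖ := by
    intro w
    rw [one_mul]
    calc ‖A (pre w)‖ ≤ ‖T (pre w)‖ := hAT _
    _ = ‖((w : V) : K₂)‖ := by rw [hpre]
    _ = ‖w‖ := rfl
  set f : W →L[ℂ] K₁ := f₀.mkContinuous 1 hf₀bound with hf
  have h_dense : DenseRange (W.subtypeL : W →L[ℂ] V) := hWd.denseRange_val
  have h_ui : IsUniformInducing (W.subtypeL : W →L[ℂ] V) :=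
    isometry_subtype_coe.isUniformInducing
  set F : V →L[ℂ] K₁ := f.extend W.subtypeL with hF
  refine ⟨F ∘L (V.orthogonalProjectionOnto : K₂ →L[ℂ] V), ?_⟩
  ext x
  have hmem : T x ∈ V := R.le_topologicalClosure ⟨x, rfl⟩
  have h2 : V.orthogonalProjectionOnto (T x) = ⟨T x, hmem⟩ :=
    Submodule.orthogonalProjectionOnto_mem_subspace_eq_self (⟨T x, hmem⟩ : V)
  have hWmem : (⟨T x, hmem⟩ : V) ∈ W := Submodule.mem_comap.mpr ⟨x, rfl⟩
  have h3 : F ⟨T x, hmem⟩ = f ⟨⟨T x, hmem⟩, hWmem⟩ :=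
    ContinuousLinearMap.extend_eq f h_dense h_ui ⟨⟨T x, hmem⟩, hWmem⟩
  have h4 : f ⟨⟨T x, hmem⟩, hWmem⟩ = A (pre ⟨⟨T x, hmem⟩, hWmem⟩) := rfl
  have h5 : A x = A (pre ⟨⟨T x, hmem⟩, hWmem⟩) := hcongr x _ rfl
  show A x = F (V.orthogonalProjectionOnto (T x))
  rw [h2, h3, h4, h5]

theorem my_coldouglas {H : Type*} [NormedAddCommGroup H] [InnerProductSpace ℂ H] [CompleteSpace H]
    {ι : Type*} [Fintype ι] (y : ι → (H →L[ℂ] H)) (A : H →L[ℂ] H)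
    (h : ∀ x, ‖A x‖ ^ 2 ≤ ∑ k, ‖y k x‖ ^ 2) :
    ∃ D : ι → (H →L[ℂ] H), A = ∑ k, D k * y k := by
  classical
  set K := PiLp 2 (fun _ : ι => H) with hK
  haveI : CompleteSpace K := by
    let e : K ≃ᵤ (∀ _ : ι, H) :=
      { toEquiv := WithLp.equiv 2 (∀ _ : ι, H)
        uniformContinuous_toFun := PiLp.uniformContinuous_ofLp 2 _
        uniformContinuous_invFun := PiLp.uniformContinuous_toLp 2 _ }
    exact e.completeSpace_iff.mpr inferInstance
  set Tl : H →ₗ[ℂ] K :=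
    { toFun := fun x => (WithLp.equiv 2 (∀ _ : ι, H)).symm (fun k => y k x)
      map_add' := fun x₁ x₂ => by
        apply (WithLp.equiv 2 (∀ _ : ι, H)).injective
        funext k
        show y k (x₁ + x₂) = y k x₁ + y k x₂
        simp [PiLp.toLp_apply]
      map_smul' := fun c x => by
        apply (WithLp.equiv 2 (∀ _ : ι, H)).injective
        funext k
        show y k (c • x) = (RingHom.id ℂ) c • y k x
        simp [PiLp.toLp_apply] } with hTl
  have hTnorm : ∀ x, ‖Tl x‖ ^ 2 = ∑ k, ‖y k x‖ ^ 2 := by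
    intro x
    rw [PiLp.norm_sq_eq_of_L2]
    rfl
  have hTbound : ∀ x, ‖Tl x‖ ≤ Real.sqrt (∑ k, ‖y k‖ ^ 2) * ‖x‖ := by
    intro x
    have h1 : ‖Tl x‖ ^ 2 ≤ (∑ k, ‖y k‖ ^ 2) * ‖x‖ ^ 2 := by
      rw [hTnorm, Finset.sum_mul]
      apply Finset.sum_le_sum
      intro k _
      have := (y k).le_opNorm x
      have h2 : (0:ℝ) ≤ ‖y k‖ * ‖x‖ := by positivity
      nlinarith [norm_nonneg (y k x)]
    have h3 : ‖Tl x‖ = Real.sqrt (‖Tl x‖ ^ 2) := (Real.sqrt_sq (norm_nonneg _)).symm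
    rw [h3]
    calc Real.sqrt (‖Tl x‖ ^ 2) ≤ Real.sqrt ((∑ k, ‖y k‖ ^ 2) * ‖x‖ ^ 2) :=
          Real.sqrt_le_sqrt h1
    _ = Real.sqrt (∑ k, ‖y k‖ ^ 2) * ‖x‖ := by
          rw [Real.sqrt_mul (by positivity), Real.sqrt_sq (norm_nonneg _)]
  set T : H →L[ℂ] K := Tl.mkContinuous _ hTbound with hT
  have hAT : ∀ x, ‖A x‖ ≤ ‖T x‖ := by
    intro x
    have h1 : ‖A x‖ ^ 2 ≤ ‖T x‖ ^ 2 := by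
      rw [show ‖T x‖ = ‖Tl x‖ from rfl, hTnorm]; exact h x
    nlinarith [norm_nonneg (A x), norm_nonneg (T x)]
  obtain ⟨D', hD'⟩ := my_douglas A T hAT
  have hsingle : ∀ (k : ι) (v : H), ‖(WithLp.equiv 2 (∀ _ : ι, H)).symm (Pi.single k v)‖ ≤ 1 * ‖v‖ := by
    intro k v
    rw [one_mul]
    have h1 : ‖(WithLp.equiv 2 (∀ _ : ι, H)).symm (Pi.single k v)‖ ^ 2 = ‖v‖ ^ 2 := by
      rw [PiLp.norm_sq_eq_of_L2]
      simp only [WithLp.equiv_symm_apply, PiLp.toLp_apply]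
      rw [Finset.sum_eq_single k]
      · rw [Pi.single_eq_same]
      · intro b _ hb; rw [Pi.single_eq_of_ne hb, norm_zero, zero_pow two_ne_zero]
      · intro hk; exact absurd (Finset.mem_univ k) hk
    nlinarith [norm_nonneg ((WithLp.equiv 2 (∀ _ : ι, H)).symm (Pi.single k v)), norm_nonneg v]
  set sing : ι → (H →L[ℂ] K) := fun k =>
    LinearMap.mkContinuous
      { toFun := fun v => (WithLp.equiv 2 (∀ _ : ι, H)).symm (Pi.single k v)
        map_add' := fun v w => by
          apply (WithLp.equiv 2 (∀ _ : ι, H)).injective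
          funext i
          show (Pi.single k (v + w) : ι → H) i = (Pi.single k v : ι → H) i + (Pi.single k w : ι → H) i
          simp [PiLp.toLp_apply, Pi.single_add]
        map_smul' := fun c v => by
          apply (WithLp.equiv 2 (∀ _ : ι, H)).injective
          funext i
          show (Pi.single k (c • v) : ι → H) i = (RingHom.id ℂ) c • (Pi.single k v : ι → H) i
          simp [PiLp.toLp_apply, Pi.single_smul] }
      1 (fun v => hsingle k v) with hsing
  have hTsum : ∀ x, T x = ∑ k, sing k (y k x) := by
    intro x
    apply (WithLp.linearEquiv 2 ℂ (∀ _ : ι, H)).injective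
    rw [map_sum]
    have h2 : ∀ k, (WithLp.linearEquiv 2 ℂ (∀ _ : ι, H)) (sing k (y k x)) = Pi.single k (y k x) :=
      fun k => rfl
    simp_rw [h2]
    exact (Finset.univ_sum_single (fun k => y k x)).symm
  refine ⟨fun k => D' ∘L sing k, ?_⟩
  ext x
  rw [hD']
  show D' (T x) = (∑ k, (D' ∘L sing k) * y k) x
  rw [hTsum, map_sum, ContinuousLinearMap.sum_apply]
  rfl


open scoped InnerProductSpace in
theorem my_norm_sq {H : Type*} [NormedAddCommGroup H] [InnerProductSpace ℂ H] [CompleteSpace H]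
    (b : H →L[ℂ] H) (x : H) :
    ‖b x‖ ^ 2 = RCLike.re (⟪(star b * b) x, x⟫_ℂ) := by
  have h1 : (star b * b) x = (ContinuousLinearMap.adjoint b) (b x) := by
    rw [ContinuousLinearMap.star_eq_adjoint]; rfl
  rw [h1, ContinuousLinearMap.adjoint_inner_left, inner_self_eq_norm_sq]

theorem my_star_mem {H : Type*} [NormedAddCommGroup H] [InnerProductSpace ℂ H] [CompleteSpace H]
    (J : TwoSidedIdeal (H →L[ℂ] H)) {b : H →L[ℂ] H} (hb : b ∈ J) : star b ∈ J := by
  have hpos : 0 ≤ star b * b := star_mul_self_nonneg b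
  set s := CFC.sqrt (star b * b) with hs
  have hs0 : 0 ≤ s := CFC.sqrt_nonneg _
  have hss : s * s = star b * b := CFC.sqrt_mul_sqrt_self _ hpos
  have hsa : star s = s := (IsSelfAdjoint.of_nonneg hs0).star_eq
  have hn : ∀ x, ‖s x‖ = ‖b x‖ := by
    intro x
    have h1 : ‖s x‖ ^ 2 = ‖b x‖ ^ 2 := by
      rw [my_norm_sq, my_norm_sq b x, hsa, hss]
    nlinarith [norm_nonneg (s x), norm_nonneg (b x)]
  obtain ⟨u, hu⟩ := my_douglas b s (fun x => (hn x).ge)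
  obtain ⟨v, hv⟩ := my_douglas s b (fun x => (hn x).le)
  have hsJ : s ∈ J := by rw [hv]; exact J.mul_mem_left v b hb
  have hbstar : star b = s * star u := by
    rw [hu, show u ∘L s = u * s from rfl, star_mul, hsa]
  rw [hbstar]; exact J.mul_mem_right _ _ hsJ

open scoped InnerProductSpace in
set_option synthInstance.maxHeartbeats 1000000 in
/-- If an operator ideal `𝒥` satisfies `𝒥² = 𝒥`, then `𝒥` has the right triple
factorization property: any finite collection `a₁, …, aₙ ∈ 𝒥` factors as `aᵢ = bᵢ c²`
with `bᵢ, c ∈ 𝒥`, `c` positive, and the left annihilator of `c²` equal to that of `c`. -/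
theorem triple_factorization_of_idempotent_ideal
    {H : Type*} [NormedAddCommGroup H] [InnerProductSpace ℂ H] [CompleteSpace H]
    [TopologicalSpace.SeparableSpace H] (hinf : ¬ FiniteDimensional ℂ H)
    (J : TwoSidedIdeal (H →L[ℂ] H)) (hproper : J ≠ ⊤)
    (hsq : ∀ a ∈ J, ∃ (n : ℕ) (b c : Fin n → (H →L[ℂ] H)),
      (∀ i, b i ∈ J ∧ c i ∈ J) ∧ a = ∑ i, b i * c i) :
    ∀ (n : ℕ) (a : Fin n → (H →L[ℂ] H)), (∀ i, a i ∈ J) →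
      ∃ (b : Fin n → (H →L[ℂ] H)) (c : H →L[ℂ] H),
        (∀ i, b i ∈ J) ∧ c ∈ J ∧ c.IsPositive ∧
        (∀ i, a i = b i * (c * c)) ∧
        (∀ x : H →L[ℂ] H, x * (c * c) = 0 ↔ x * c = 0) := by
  intro n a ha
  classical
  choose m p q hpq hsum using fun i => hsq (a i) (ha i)
  set g := ∑ s : (i : Fin n) × Fin (m i), star (q s.1 s.2) * q s.1 s.2 with hg
  have hgJ : g ∈ J :=
    TwoSidedIdeal.finsetSum_mem _ _ _ (fun s _ => J.mul_mem_left _ _ (hpq s.1 s.2).2)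
  have hg0 : 0 ≤ g := Finset.sum_nonneg fun s _ => star_mul_self_nonneg _
  set e := CFC.sqrt g with he
  have he0 : 0 ≤ e := CFC.sqrt_nonneg _
  have hee : e * e = g := CFC.sqrt_mul_sqrt_self _ hg0
  have hea : star e = e := (IsSelfAdjoint.of_nonneg he0).star_eq
  have hginner : ∀ x, RCLike.re (⟪g x, x⟫_ℂ) = ∑ s : (i : Fin n) × Fin (m i), ‖q s.1 s.2 x‖ ^ 2 := by
    intro x
    rw [hg, ContinuousLinearMap.sum_apply, sum_inner, map_sum]
    exact Finset.sum_congr rfl fun s _ => (my_norm_sq _ _).symm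
  have hex : ∀ x, ‖e x‖ ^ 2 = ∑ s : (i : Fin n) × Fin (m i), ‖q s.1 s.2 x‖ ^ 2 := by
    intro x
    rw [my_norm_sq e x, hea, hee, hginner]
  have hq_fact : ∀ s : (i : Fin n) × Fin (m i), ∃ d, q s.1 s.2 = d ∘L e := by
    intro s
    apply my_douglas
    intro x
    have h1 : ‖q s.1 s.2 x‖ ^ 2 ≤ ‖e x‖ ^ 2 := by
      rw [hex]
      exact Finset.single_le_sum (f := fun t : (i : Fin n) × Fin (m i) => ‖q t.1 t.2 x‖ ^ 2)
        (fun t _ => by positivity) (Finset.mem_univ s)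
    nlinarith [norm_nonneg (q s.1 s.2 x), norm_nonneg (e x)]
  choose d hd using hq_fact
  have hd' : ∀ (i : Fin n) (j : Fin (m i)), q i j = d ⟨i, j⟩ * e := fun i j => hd ⟨i, j⟩
  obtain ⟨De, hDe⟩ := my_coldouglas (fun s : (i : Fin n) × Fin (m i) => q s.1 s.2) e
    (fun x => (hex x).le)
  have heJ : e ∈ J := by
    rw [hDe]
    exact TwoSidedIdeal.finsetSum_mem _ _ _ fun s _ => J.mul_mem_left _ _ (hpq s.1 s.2).2
  obtain ⟨M, u, v, huv, hesum⟩ := hsq e heJ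
  set c := CFC.sqrt e with hc
  have hc0 : 0 ≤ c := CFC.sqrt_nonneg _
  have hcc : c * c = e := CFC.sqrt_mul_sqrt_self _ he0
  have hca : star c = c := (IsSelfAdjoint.of_nonneg hc0).star_eq
  set w : Fin M ⊕ Fin M → (H →L[ℂ] H) := Sum.elim (fun k => star (u k)) v with hw
  have hcbound : ∀ x, ‖c x‖ ^ 2 ≤ ∑ k, ‖w k x‖ ^ 2 := by
    intro x
    rw [my_norm_sq c x, hca, hcc, Fintype.sum_sum_type]
    have h1 : (⟪e x, x⟫_ℂ) = ∑ k, ⟪v k x, star (u k) x⟫_ℂ := by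
      rw [hesum, ContinuousLinearMap.sum_apply, sum_inner]
      refine Finset.sum_congr rfl fun k _ => ?_
      show ⟪(u k) ((v k) x), x⟫_ℂ = _
      rw [ContinuousLinearMap.star_eq_adjoint, ← ContinuousLinearMap.adjoint_adjoint (u k),
        ContinuousLinearMap.adjoint_inner_left, ContinuousLinearMap.adjoint_adjoint]
    rw [h1, map_sum, ← Finset.sum_add_distrib]
    refine Finset.sum_le_sum fun k _ => ?_
    have h2 := re_inner_le_norm (𝕜 := ℂ) (v k x) (star (u k) x)
    have h3 : w (Sum.inl k) = star (u k) := rfl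
    have h4 : w (Sum.inr k) = v k := rfl
    rw [h3, h4]
    nlinarith [norm_nonneg (v k x), norm_nonneg (star (u k) x)]
  obtain ⟨Dc, hDc⟩ := my_coldouglas w c hcbound
  have hcJ : c ∈ J := by
    rw [hDc]
    refine TwoSidedIdeal.finsetSum_mem _ _ _ fun k _ => ?_
    apply J.mul_mem_left
    cases k with
    | inl k => exact my_star_mem J (huv k).1
    | inr k => exact (huv k).2
  refine ⟨fun i => ∑ j, p i j * d ⟨i, j⟩, c, ?_, hcJ,
    (ContinuousLinearMap.nonneg_iff_isPositive c).mp hc0, ?_, ?_⟩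
  · intro i
    exact TwoSidedIdeal.finsetSum_mem _ _ _ fun j _ => J.mul_mem_right _ _ (hpq i j).1
  · intro i
    rw [hcc, hsum i, Finset.sum_mul]
    refine Finset.sum_congr rfl fun j _ => ?_
    rw [hd' i j, mul_assoc]
  · intro x
    constructor
    · intro hx
      have h1 : (x * c) * star (x * c) = 0 := by
        rw [star_mul, hca]
        calc x * c * (c * star x) = x * (c * c) * star x := by
              simp only [mul_assoc]
        _ = 0 := by rw [hx, zero_mul]
      have h2 : ‖x * c‖ * ‖x * c‖ = 0 := by
        rw [← CStarRing.norm_self_mul_star, h1, norm_zero]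
      exact norm_eq_zero.mp (mul_self_eq_zero.mp h2)
    · intro hx
      rw [← mul_assoc, hx, zero_mul]
end

section
/- Let A be a sum ring with structural elements α₀,α₁,β₀,β₁, and let B be any unital ring. Then A ⊗ B is again a sum ring with structural elements αᵢ ⊗ 1, βᵢ ⊗ 1. Moreover, if A is an infinite sum ring with infinity map ∞: A → A, then A ⊗ B is an infinite sum ring with (a ⊗ b)^∞ = a^∞ ⊗ b. -/
open scoped TensorProduct

/-- If `A` is a (infinite) sum ring and `B` any unital algebra, then `A ⊗ B` is again a
(infinite) sum ring, with structural elements `αᵢ ⊗ 1`, `βᵢ ⊗ 1` and infinity map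
`(a ⊗ b)^∞ = a^∞ ⊗ b`. -/
theorem tensor_sumRing {k A B : Type*} [CommRing k] [Ring A] [Ring B]
    [Algebra k A] [Algebra k B]
    (α₀ α₁ β₀ β₁ : A)
    (h₀ : α₀ * β₀ = 1) (h₁ : α₁ * β₁ = 1) (hsum : β₀ * α₀ + β₁ * α₁ = 1)
    (inf : A →ₐ[k] A)
    (hinf : ∀ a : A, β₀ * a * α₀ + β₁ * inf a * α₁ = inf a) :
    (α₀ ⊗ₜ[k] (1 : B)) * (β₀ ⊗ₜ[k] (1 : B)) = 1 ∧
    (α₁ ⊗ₜ[k] (1 : B)) * (β₁ ⊗ₜ[k] (1 : B)) = 1 ∧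
    (β₀ ⊗ₜ[k] (1 : B)) * (α₀ ⊗ₜ[k] (1 : B)) + (β₁ ⊗ₜ[k] (1 : B)) * (α₁ ⊗ₜ[k] (1 : B)) = 1 ∧
    (∀ a : A, ∀ b : B,
      Algebra.TensorProduct.map inf (AlgHom.id k B) (a ⊗ₜ[k] b) = inf a ⊗ₜ[k] b) ∧
    (∀ x : A ⊗[k] B,
      (β₀ ⊗ₜ[k] (1 : B)) * x * (α₀ ⊗ₜ[k] (1 : B)) +
        (β₁ ⊗ₜ[k] (1 : B)) * (Algebra.TensorProduct.map inf (AlgHom.id k B) x) *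
          (α₁ ⊗ₜ[k] (1 : B)) =
        Algebra.TensorProduct.map inf (AlgHom.id k B) x) := by
  refine ⟨?_, ?_, ?_, ?_, ?_⟩
  · rw [Algebra.TensorProduct.tmul_mul_tmul, h₀, one_mul]; rfl
  · rw [Algebra.TensorProduct.tmul_mul_tmul, h₁, one_mul]; rfl
  · rw [Algebra.TensorProduct.tmul_mul_tmul, Algebra.TensorProduct.tmul_mul_tmul,
      one_mul, ← TensorProduct.add_tmul, hsum]; rfl
  · intro a b; simp
  · intro x
    induction x using TensorProduct.induction_on with
    | zero => simp
    | tmul a b =>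
        simp only [Algebra.TensorProduct.map_tmul, AlgHom.coe_id, id_eq,
          Algebra.TensorProduct.tmul_mul_tmul, one_mul, mul_one, ← TensorProduct.add_tmul,
          hinf]
    | add x y hx hy =>
        simp only [map_add, mul_add, add_mul]
        conv_rhs => rw [← hx, ← hy]
        abel
end
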